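/- arXiv:1409.2330 — 2 statements merged into one kernel-verified Lean document; each statement's English description precedes it below -/
import Mathlib

section
/- Let 1 ≤ p < ∞ with p ≠ 2. Then h_p(1, ℓ_p) = ω₀, where h_p(1, ·) is the ordinal L_p-index computed with the parameter δ = 1. -/
set_option synthInstance.maxHeartbeats 1000000
set_option maxHeartbeats 2000000

open MeasureTheory ProbabilityTheory Ordinal
open scoped ENNReal

noncomputable section

/-- An element of `X^𝒟`: a function from the dyadic strings (elements of `D_n`,
i.e. strings of `0`'s and `1`'s) of some length `n` to `X`. -/
def TreeEl (X : Type*) : Type _ := Σ n : ℕ, (Fin n → Bool) → X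

namespace OrdinalLpIndex

/-- The strict partial order on `X^𝒟` : `u ≺ v` iff `|u| < |v|` and, with `k = |v| - |u|`,
`u(t) = 2^{-k/p} ∑_{s ∈ D_k} v(t·s)` for every `t ∈ D_{|u|}`. -/
def Prec {X : Type*} [NormedAddCommGroup X] [NormedSpace ℝ X] (p : ℝ) (u v : TreeEl X) :
    Prop :=
  ∃ h : u.1 < v.1, ∀ t : Fin u.1 → Bool,
    u.2 t = (2 : ℝ) ^ (-((v.1 - u.1 : ℕ) : ℝ) / p) •
      ∑ s : Fin (v.1 - u.1) → Bool,
        v.2 (fun i => Fin.append t s (Fin.cast (Nat.add_sub_cancel' h.le).symm i))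

variable (p δ : ℝ) (X : Type*) [NormedAddCommGroup X] [NormedSpace ℝ X]

/-- The set `H_0^δ(X)` : all `u ∈ X^𝒟` such that
`δ (∑_{t ∈ D_{|u|}} |c(t)|^p)^{1/p} ≤ ‖∑_{t ∈ D_{|u|}} c(t) u(t)‖ ≤ (∑_{t ∈ D_{|u|}} |c(t)|^p)^{1/p}`
for all real coefficients `c`. -/
def H0 : Set (TreeEl X) :=
  {u | ∀ c : (Fin u.1 → Bool) → ℝ,
    δ * (∑ t, |c t| ^ p) ^ (1 / p) ≤ ‖∑ t, c t • u.2 t‖ ∧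
      ‖∑ t, c t • u.2 t‖ ≤ (∑ t, |c t| ^ p) ^ (1 / p)}

/-- The transfinite family `H_α^δ(X)` : `H_{α+1}^δ(X) = {u ∈ H_α^δ(X) : u ≺ v for some
v ∈ H_α^δ(X)}` and `H_α^δ(X) = ⋂_{β<α} H_β^δ(X)` at limit ordinals. -/
def Hset (α : Ordinal) : Set (TreeEl X) :=
  Ordinal.limitRecOn α (H0 p δ X)
    (fun _ Hβ => {u | u ∈ Hβ ∧ ∃ v ∈ Hβ, Prec p u v})
    (fun β _ ih => {u | ∀ γ (h : γ < β), u ∈ ih γ h})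

/-- `h_p(δ, X)` : the least ordinal `α` with `H_α^δ(X) = H_{α+1}^δ(X)`. -/
def hIdx : Ordinal :=
  sInf {α | Hset p δ X α = Hset p δ X (α + 1)}

/-- The space `L_p[0,1]`. -/
abbrev Lp01 (p : ℝ) : Type :=
  Lp ℝ (ENNReal.ofReal p) (volume.restrict (Set.Icc (0 : ℝ) 1))

/-- `X` embeds isomorphically into `Y` : there is a bounded linear map `X → Y` which is
bounded below. -/
def Embeds (X Y : Type*) [NormedAddCommGroup X] [NormedSpace ℝ X] [NormedAddCommGroup Y]
    [NormedSpace ℝ Y] : Prop :=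
  ∃ T : X →L[ℝ] Y, ∃ c : ℝ, 0 < c ∧ ∀ x, c * ‖x‖ ≤ ‖T x‖

open scoped Classical in
/-- The ordinal `L_p`-index `h_p(X)` : `sup_{0<δ≤1} h_p(δ, X)` if `L_p[0,1]` does not embed
isomorphically into `X`, and `ω₁` otherwise. -/
def hp (hp1 : 1 ≤ p) : Ordinal :=
  haveI : Fact (1 ≤ ENNReal.ofReal p) := ⟨ENNReal.one_le_ofReal.2 hp1⟩
  if Embeds (Lp01 p) X then Ordinal.omega 1
  else ⨆ δ : Set.Ioc (0 : ℝ) 1, hIdx p δ X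

end OrdinalLpIndex

open OrdinalLpIndex

open Real Finset

-- Real superadditivity / subadditivity of rpow
lemma real_superadd {q : ℝ} (hq : 1 ≤ q) {x y : ℝ} (hx : 0 ≤ x) (hy : 0 ≤ y) :
    x ^ q + y ^ q ≤ (x + y) ^ q := by
  lift x to NNReal using hx
  lift y to NNReal using hy
  have := NNReal.add_rpow_le_rpow_add x y hq
  exact_mod_cast this

lemma real_subadd {q : ℝ} (hq0 : 0 ≤ q) (hq : q ≤ 1) {x y : ℝ} (hx : 0 ≤ x) (hy : 0 ≤ y) :
    (x + y) ^ q ≤ x ^ q + y ^ q := by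
  lift x to NNReal using hx
  lift y to NNReal using hy
  have := NNReal.rpow_add_le_add_rpow x y hq0 hq
  exact_mod_cast this

lemma sq_rpow_half (p x : ℝ) : (x ^ 2) ^ (p / 2) = |x| ^ p := by
  rw [← sq_abs, ← Real.rpow_natCast |x| 2, ← Real.rpow_mul (abs_nonneg x)]
  congr 1
  ring

-- Key pointwise inequalities (Clarkson-type, equality case)
lemma key_eq {p : ℝ} (hp : p ≠ 0) {s t : ℝ} (h : s = 0 ∨ t = 0) :
    |s + t| ^ p + |s - t| ^ p = 2 * |s| ^ p + 2 * |t| ^ p := by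
  rcases h with rfl | rfl <;>
    simp [abs_neg, Real.rpow_natCast, Real.zero_rpow hp, abs_zero] <;> ring

lemma key_gt {p : ℝ} (hp2 : 2 < p) {s t : ℝ} (hs : s ≠ 0) (ht : t ≠ 0) :
    2 * |s| ^ p + 2 * |t| ^ p < |s + t| ^ p + |s - t| ^ p := by
  have hq : 1 < p / 2 := by linarith
  have hab : (s + t) ^ 2 ≠ (s - t) ^ 2 := by
    intro h
    have h4 : 4 * (s * t) = 0 := by nlinarith [h]
    rcases mul_eq_zero.1 (by linarith : s * t = 0) with h | h <;> [exact hs h; exact ht h]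
  have hconv := (strictConvexOn_rpow hq).2 (Set.mem_Ici.2 (sq_nonneg (s+t)))
    (Set.mem_Ici.2 (sq_nonneg (s-t))) hab (by norm_num : (0:ℝ) < 1/2)
    (by norm_num : (0:ℝ) < 1/2) (by norm_num)
  simp only [_root_.smul_eq_mul] at hconv
  have hmid : (1/2) * (s+t)^2 + (1/2) * (s-t)^2 = s^2 + t^2 := by ring
  rw [hmid, sq_rpow_half, sq_rpow_half] at hconv
  -- hconv : (s^2 + t^2) ^ (p/2) < 1/2 * |s+t|^p + 1/2 * |s-t|^p
  have hsup := real_superadd hq.le (sq_nonneg s) (sq_nonneg t)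
  rw [sq_rpow_half, sq_rpow_half] at hsup
  linarith

lemma key_lt {p : ℝ} (hp1 : 1 ≤ p) (hp2 : p < 2) {s t : ℝ} (hs : s ≠ 0) (ht : t ≠ 0) :
    |s + t| ^ p + |s - t| ^ p < 2 * |s| ^ p + 2 * |t| ^ p := by
  have hq0 : 0 < p / 2 := by linarith
  have hq : p / 2 < 1 := by linarith
  have hab : (s + t) ^ 2 ≠ (s - t) ^ 2 := by
    intro h
    have h4 : 4 * (s * t) = 0 := by nlinarith [h]
    rcases mul_eq_zero.1 (by linarith : s * t = 0) with h | h <;> [exact hs h; exact ht h]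
  have hconv := (Real.strictConcaveOn_rpow hq0 hq).2 (Set.mem_Ici.2 (sq_nonneg (s+t)))
    (Set.mem_Ici.2 (sq_nonneg (s-t))) hab (by norm_num : (0:ℝ) < 1/2)
    (by norm_num : (0:ℝ) < 1/2) (by norm_num)
  simp only [_root_.smul_eq_mul] at hconv
  have hmid : (1/2) * (s+t)^2 + (1/2) * (s-t)^2 = s^2 + t^2 := by ring
  rw [hmid, sq_rpow_half, sq_rpow_half] at hconv
  have hsub := real_subadd hq0.le hq.le (sq_nonneg s) (sq_nonneg t)
  rw [sq_rpow_half, sq_rpow_half] at hsub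
  linarith

def bits (j : ℕ) (i : ℕ) : Fin j → Bool := fun r => i.testBit r

lemma bits_mul_two_add (j i : ℕ) (b : Bool) :
    bits (j+1) (2 * i + (if b then 1 else 0)) = Fin.cons b (bits j i) := by
  funext r
  refine Fin.cases ?_ (fun r' => ?_) r
  · rw [Fin.cons_zero]
    show Nat.testBit _ 0 = b
    rcases b with _ | _ <;> simp [Nat.testBit_zero] <;> omega
  · rw [Fin.cons_succ]
    show Nat.testBit _ (r'.val + 1) = Nat.testBit i r'.val
    rw [Nat.testBit_succ]
    congr 1
    rcases b with _ | _ <;> simp <;> omega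

lemma sum_range_two_mul (m : ℕ) (F : ℕ → ℝ) :
    ∑ i ∈ Finset.range (2 * m), F i = ∑ i ∈ Finset.range m, (F (2*i) + F (2*i+1)) := by
  induction m with
  | zero => simp
  | succ m ih =>
      have : 2 * (m + 1) = (2 * m) + 1 + 1 := by ring
      rw [this, Finset.sum_range_succ, Finset.sum_range_succ, ih, Finset.sum_range_succ]
      ring

lemma count_sum : ∀ (j n : ℕ), j ≤ n → ∀ (h : (Fin j → Bool) → ℝ),
    ∑ i ∈ Finset.range (2^n), h (bits j i) = 2^(n-j) * ∑ t, h t := by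
  intro j
  induction j with
  | zero =>
      intro n _ h
      have hb : ∀ i, bits 0 i = (fun r => Bool.false) := fun i => Subsingleton.elim _ _
      simp only [hb]
      rw [Finset.sum_const, Finset.card_range,
        Fintype.sum_subsingleton h (fun r => false)]
      simp [nsmul_eq_mul]
  | succ j ih =>
      intro n hn h
      have h2 : 2^n = 2 * 2^(n-1) := by
        rw [← pow_succ']
        congr 1
        omega
      rw [h2, sum_range_two_mul]
      have hb0 : ∀ i, bits (j+1) (2*i) = Fin.cons false (bits j i) := by
        intro i; simpa using bits_mul_two_add j i false
      have hb1 : ∀ i, bits (j+1) (2*i+1) = Fin.cons true (bits j i) := by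
        intro i; simpa using bits_mul_two_add j i true
      simp only [hb0, hb1]
      rw [ih (n-1) (by omega) (fun t => h (Fin.cons false t) + h (Fin.cons true t))]
      have hsum : ∑ t : Fin (j+1) → Bool, h t
          = ∑ t : Fin j → Bool, (h (Fin.cons false t) + h (Fin.cons true t)) := by
        rw [← Equiv.sum_comp (Fin.consEquiv fun _ : Fin (j+1) => Bool) h,
          Fintype.sum_prod_type_right]
        congr 1
        funext t
        rw [Fintype.sum_bool]
        simp [Fin.consEquiv]
        ring
      rw [hsum]
      congr 1
      · congr 1
        omega


variable {p : ℝ}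

abbrev Xsp (p : ℝ) : Type := lp (fun _ : ℕ => ℝ) (ENNReal.ofReal p)

lemma toReal_q (hp1 : 1 ≤ p) : (ENNReal.ofReal p).toReal = p :=
  ENNReal.toReal_ofReal (by linarith)

lemma hp0 (hp1 : 1 ≤ p) : 0 < p := by linarith

lemma fact_one_le (hp1 : 1 ≤ p) : Fact (1 ≤ ENNReal.ofReal p) :=
  ⟨ENNReal.one_le_ofReal.2 hp1⟩

lemma memℓp_of_support (hp1 : 1 ≤ p) {f : ℕ → ℝ} (N : ℕ) (h : ∀ i, N ≤ i → f i = 0) :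
    Memℓp f (ENNReal.ofReal p) := by
  refine memℓp_gen ?_
  apply summable_of_ne_finset_zero (s := Finset.range N)
  intro i hi
  rw [Finset.mem_range, not_lt] at hi
  simp only [h i hi, norm_zero]
  rw [toReal_q hp1]
  exact Real.zero_rpow (hp0 hp1).ne'

lemma lp_norm_rpow (hp1 : 1 ≤ p) (f : Xsp p) : ‖f‖ ^ p = ∑' i, |f i| ^ p := by
  have := lp.norm_rpow_eq_tsum (p := ENNReal.ofReal p)
    (by rw [toReal_q hp1]; exact hp0 hp1) f
  rw [toReal_q hp1] at this
  simpa [Real.norm_eq_abs] using this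

lemma lp_norm_eq (hp1 : 1 ≤ p) {f : ℕ → ℝ} {N : ℕ} (h : ∀ i, N ≤ i → f i = 0)
    (hmem : Memℓp f (ENNReal.ofReal p)) :
    ‖(⟨f, hmem⟩ : Xsp p)‖ = (∑ i ∈ Finset.range N, |f i| ^ p) ^ (1/p) := by
  haveI := fact_one_le hp1
  have hc : ∀ i, ((⟨f, hmem⟩ : Xsp p) : ∀ _ : ℕ, ℝ) i = f i := fun i => rfl
  have h1 : ‖(⟨f, hmem⟩ : Xsp p)‖ ^ p = ∑ i ∈ Finset.range N, |f i| ^ p := by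
    rw [lp_norm_rpow hp1]
    simp only [hc]
    apply tsum_eq_sum
    intro i hi
    rw [Finset.mem_range, not_lt] at hi
    simp [h i hi, Real.zero_rpow (hp0 hp1).ne']
  rw [← h1, one_div]
  exact (Real.rpow_rpow_inv (norm_nonneg (⟨f, hmem⟩ : Xsp p)) (hp0 hp1).ne').symm

def Wfun (p : ℝ) (j k : ℕ) (t : Fin j → Bool) : ℕ → ℝ :=
  fun i => if i < 2^(j+k) ∧ bits j i = t then (2:ℝ) ^ (-(k:ℝ)/p) else 0

lemma Wfun_memℓp (hp1 : 1 ≤ p) (j k : ℕ) (t : Fin j → Bool) :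
    Memℓp (Wfun p j k t) (ENNReal.ofReal p) := by
  refine memℓp_of_support hp1 (2^(j+k)) (fun i hi => ?_)
  simp only [Wfun, ite_eq_right_iff]
  intro h
  omega

def Wlp (hp1 : 1 ≤ p) (j k : ℕ) (t : Fin j → Bool) : Xsp p :=
  ⟨Wfun p j k t, Wfun_memℓp hp1 j k t⟩

def tree (hp1 : 1 ≤ p) (j k : ℕ) : TreeEl (Xsp p) := ⟨j, fun t => Wlp hp1 j k t⟩

lemma theta_pos (hp1 : 1 ≤ p) (k : ℕ) : (0:ℝ) < (2:ℝ) ^ (-(k:ℝ)/p) :=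
  Real.rpow_pos_of_pos (by norm_num) _

lemma theta_rpow (hp1 : 1 ≤ p) (k : ℕ) :
    ((2:ℝ) ^ (-(k:ℝ)/p)) ^ p = (2:ℝ) ^ (-(k:ℝ)) := by
  rw [← Real.rpow_mul (by norm_num : (0:ℝ) ≤ 2), div_mul_cancel₀]
  exact (hp0 hp1).ne'

lemma sum_smul_W_coe (hp1 : 1 ≤ p) (j k : ℕ) (c : (Fin j → Bool) → ℝ) (i : ℕ) :
    ((∑ t, c t • Wlp hp1 j k t : Xsp p) : ∀ _ : ℕ, ℝ) i
      = (if i < 2^(j+k) then c (bits j i) * (2:ℝ) ^ (-(k:ℝ)/p) else 0) := by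
  haveI := fact_one_le hp1
  rw [lp.coeFn_sum, Finset.sum_apply]
  have : ∀ t, (Wlp hp1 j k t : ∀ _ : ℕ, ℝ) i = Wfun p j k t i := fun t => rfl
  simp only [lp.coeFn_smul, Pi.smul_apply, this, _root_.smul_eq_mul, Wfun]
  by_cases hi : i < 2^(j+k)
  · simp only [hi, true_and, if_true, mul_ite, mul_zero]
    rw [Finset.sum_ite_eq Finset.univ (bits j i) (fun t => c t * (2:ℝ) ^ (-(k:ℝ)/p))]
    simp
  · simp [hi]

lemma norm_sum_smul_W (hp1 : 1 ≤ p) (j k : ℕ) (c : (Fin j → Bool) → ℝ) :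
    ‖(∑ t, c t • Wlp hp1 j k t : Xsp p)‖ = (∑ t, |c t| ^ p) ^ (1/p) := by
  haveI := fact_one_le hp1
  set gfun : ℕ → ℝ := fun i => if i < 2^(j+k) then c (bits j i) * (2:ℝ) ^ (-(k:ℝ)/p) else 0
    with hg
  have hsupp : ∀ i, 2^(j+k) ≤ i → gfun i = 0 := by
    intro i hi; simp only [hg]; rw [if_neg]; omega
  have hmem : Memℓp gfun (ENNReal.ofReal p) := memℓp_of_support hp1 _ hsupp
  have heq : (∑ t, c t • Wlp hp1 j k t : Xsp p) = ⟨gfun, hmem⟩ := by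
    apply Subtype.ext
    funext i
    exact sum_smul_W_coe hp1 j k c i
  rw [heq, lp_norm_eq hp1 hsupp hmem]
  congr 1
  have habs : ∀ i ∈ Finset.range (2^(j+k)), |gfun i| ^ p
      = (fun t => |c t| ^ p * (2:ℝ) ^ (-(k:ℝ))) (bits j i) := by
    intro i hi
    rw [Finset.mem_range] at hi
    simp only [hg, if_pos hi, abs_mul, abs_of_pos (theta_pos hp1 k)]
    rw [Real.mul_rpow (abs_nonneg _) (theta_pos hp1 k).le, theta_rpow hp1]
  rw [Finset.sum_congr rfl habs, count_sum j (j+k) (by omega) (fun t => |c t| ^ p * (2:ℝ) ^ (-(k:ℝ)))]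
  have hkk : (j+k) - j = k := by omega
  rw [hkk, ← Finset.sum_mul, ← mul_assoc, mul_comm ((2:ℝ)^k), mul_assoc]
  have h1 : (2:ℝ)^(k:ℕ) * (2:ℝ) ^ (-(k:ℝ)) = 1 := by
    rw [← Real.rpow_natCast 2 k, ← Real.rpow_add (by norm_num : (0:ℝ) < 2)]
    simp
  rw [h1, mul_one]

lemma append_cast_eval {j e n : ℕ} (t : Fin j → Bool) (s : Fin e → Bool)
    (pf : n = j + e) (r : Fin n) :
    Fin.append t s (Fin.cast pf r) =
      if h : (r : ℕ) < j then t ⟨r, h⟩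
      else s ⟨(r : ℕ) - j, by have := r.isLt; omega⟩ := by
  by_cases h : (r : ℕ) < j
  · rw [dif_pos h]
    have hc : Fin.cast pf r = Fin.castAdd e ⟨r, h⟩ := by ext; simp
    rw [hc, Fin.append_left]
  · rw [dif_neg h]
    have hc : Fin.cast pf r = Fin.natAdd j ⟨(r : ℕ) - j, by have := r.isLt; omega⟩ := by
      ext; simp; omega
    rw [hc, Fin.append_right]

lemma bits_eq_append_iff {j m e : ℕ} (pf : j + m = j + e) (t : Fin j → Bool)
    (s : Fin e → Bool) (i : ℕ) :
    (bits (j+m) i = fun r => Fin.append t s (Fin.cast pf r)) ↔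
      (bits j i = t ∧ s = fun b : Fin e => i.testBit (j + (b : ℕ))) := by
  have he : m = e := by omega
  constructor
  · intro h
    have h' : ∀ r : Fin (j+m), i.testBit (r : ℕ) = Fin.append t s (Fin.cast pf r) :=
      fun r => congrFun h r
    constructor
    · funext r
      have hr := h' ⟨(r : ℕ), by have := r.isLt; omega⟩
      rw [append_cast_eval] at hr
      rw [dif_pos (by exact r.isLt)] at hr
      exact hr
    · funext b
      have hb := h' ⟨j + (b : ℕ), by have := b.isLt; omega⟩
      rw [append_cast_eval] at hb
      rw [dif_neg (by exact Nat.not_lt.2 (Nat.le_add_right j (b : ℕ)))] at hb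
      have : (⟨j + (b : ℕ) - j, by have := b.isLt; omega⟩ : Fin e) = b := by
        ext; simp
      rw [this] at hb
      exact hb.symm
  · rintro ⟨h1, h2⟩
    funext r
    rw [append_cast_eval]
    by_cases hr : (r : ℕ) < j
    · rw [dif_pos hr]
      exact congrFun h1 ⟨(r : ℕ), hr⟩
    · rw [dif_neg hr]
      rw [h2]
      show i.testBit (r : ℕ) = i.testBit (j + ((r : ℕ) - j))
      congr 1
      omega

lemma tree_prec (hp1 : 1 ≤ p) [Fact (1 ≤ ENNReal.ofReal p)] (j k m : ℕ) (hm : 0 < m) :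
    Prec p (tree hp1 j (k+m)) (tree hp1 (j+m) k) := by
  have hlt : (tree hp1 j (k+m)).1 < (tree hp1 (j+m) k).1 := by
    show j < j + m; omega
  refine ⟨hlt, fun (t : Fin j → Bool) => ?_⟩
  simp only [tree]
  apply Subtype.ext
  funext i
  set e := j + m - j with hedef
  have he : e = m := by omega
  rw [lp.coeFn_smul, Pi.smul_apply, lp.coeFn_sum, Finset.sum_apply]
  set sbar : Fin e → Bool := fun b => i.testBit (j + (b : ℕ)) with hsbar
  have hrhs : ∀ (s : Fin e → Bool) (pf : j + m = j + e),
      ((Wlp hp1 (j+m) k (fun r => Fin.append t s (Fin.cast pf r)) : Xsp p) : ∀ _ : ℕ, ℝ) i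
        = if s = sbar then
            (if i < 2^((j+m)+k) ∧ bits j i = t then (2:ℝ) ^ (-(k:ℝ)/p) else 0) else 0 := by
    intro s pf
    show Wfun p (j+m) k _ i = _
    rw [Wfun]
    by_cases hs : s = sbar
    · rw [if_pos hs]
      by_cases hC : i < 2^((j+m)+k) ∧ bits j i = t
      · rw [if_pos, if_pos hC]
        exact ⟨hC.1, (bits_eq_append_iff pf t s i).2 ⟨hC.2, hs⟩⟩
      · rw [if_neg, if_neg hC]
        intro hC'
        exact hC ⟨hC'.1, ((bits_eq_append_iff pf t s i).1 hC'.2).1⟩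
    · rw [if_neg hs, if_neg]
      intro hC'
      exact hs ((bits_eq_append_iff pf t s i).1 hC'.2).2
  erw [Finset.sum_congr rfl (fun s _ => hrhs s _)]
  erw [Fintype.sum_ite_eq' sbar
    (fun _ => if i < 2^((j+m)+k) ∧ bits j i = t then (2:ℝ) ^ (-(k:ℝ)/p) else 0)]
  have hexp : (j+m)+k = j+(k+m) := by omega
  show Wfun p j (k+m) t i = _
  rw [hexp, Wfun, _root_.smul_eq_mul, mul_ite, mul_zero]
  have hcast : ((e : ℕ) : ℝ) = (m : ℝ) := by exact_mod_cast congrArg (Nat.cast (R := ℝ)) he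
  by_cases hC : i < 2^(j+(k+m)) ∧ bits j i = t
  · rw [if_pos hC, if_pos hC, hcast, ← Real.rpow_add (by norm_num : (0:ℝ) < 2)]
    congr 1
    push_cast
    ring
  · rw [if_neg hC, if_neg hC]
lemma tree_mem_H0 (hp1 : 1 ≤ p) [Fact (1 ≤ ENNReal.ofReal p)] (j k : ℕ) :
    tree hp1 j k ∈ H0 p 1 (Xsp p) := by
  intro c
  have hnorm : ‖∑ t, c t • (tree hp1 j k).2 t‖ = (∑ t, |c t| ^ p) ^ (1/p) :=
    norm_sum_smul_W hp1 j k c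
  rw [hnorm, one_mul]
  exact ⟨le_refl _, le_refl _⟩

section HsetLemmas

variable (δ : ℝ) (X : Type*) [NormedAddCommGroup X] [NormedSpace ℝ X]

lemma Hset_zero : Hset p δ X 0 = H0 p δ X := Ordinal.limitRecOn_zero _ _ _

lemma Hset_succ (α : Ordinal) : Hset p δ X (α + 1) =
    {u | u ∈ Hset p δ X α ∧ ∃ v ∈ Hset p δ X α, Prec p u v} := by
  rw [Hset, Ordinal.add_one_eq_succ, Ordinal.limitRecOn_succ]
  rfl

lemma Hset_limit (α : Ordinal) (h : Order.IsSuccLimit α) : Hset p δ X α =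
    {u | ∀ γ (_ : γ < α), u ∈ Hset p δ X γ} := by
  rw [Hset, Ordinal.limitRecOn_limit _ _ _ _ h]
  rfl

lemma Hset_nat_subset_H0 (M : ℕ) : Hset p δ X (M : Ordinal) ⊆ H0 p δ X := by
  induction M with
  | zero => rw [Nat.cast_zero, Hset_zero]
  | succ M ih =>
      rw [show ((M+1 : ℕ) : Ordinal) = (M : Ordinal) + 1 by push_cast; rfl, Hset_succ]
      exact fun u hu => ih hu.1

end HsetLemmas

lemma tree_mem_Hset (hp1 : 1 ≤ p) [Fact (1 ≤ ENNReal.ofReal p)] :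
    ∀ (M j k : ℕ), M ≤ k → tree hp1 j k ∈ Hset p 1 (Xsp p) (M : Ordinal) := by
  intro M
  induction M with
  | zero => intro j k _; rw [Nat.cast_zero, Hset_zero]; exact tree_mem_H0 hp1 j k
  | succ M ih =>
      intro j k hMk
      rw [show ((M+1 : ℕ) : Ordinal) = (M : Ordinal) + 1 by push_cast; rfl, Hset_succ]
      refine ⟨ih j k (by omega), tree hp1 (j+1) (k-1), ih (j+1) (k-1) (by omega), ?_⟩
      have hPrec := tree_prec hp1 j (k-1) 1 (by omega)
      rw [show (k-1)+1 = k by omega] at hPrec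
      exact hPrec
lemma H0_norm_single (hp1 : 1 ≤ p) [Fact (1 ≤ ENNReal.ofReal p)] {u : TreeEl (Xsp p)}
    (hu : u ∈ H0 p 1 (Xsp p)) (t : Fin u.1 → Bool) : ‖u.2 t‖ = 1 := by
  have h := hu (fun r => if r = t then 1 else 0)
  have h1 : (∑ r, (if r = t then (1:ℝ) else 0) • u.2 r) = u.2 t := by
    simp only [ite_smul, one_smul, zero_smul]
    rw [Finset.sum_ite_eq' Finset.univ t (fun r => u.2 r)]
    simp
  have h2 : (∑ r, |if r = t then (1:ℝ) else 0| ^ p) = 1 := by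
    have : ∀ r ∈ Finset.univ, |if r = t then (1:ℝ) else 0| ^ p
        = if r = t then (1:ℝ) else 0 := by
      intro r _
      by_cases hr : r = t <;> simp [hr, Real.zero_rpow (hp0 hp1).ne']
    rw [Finset.sum_congr rfl this, Finset.sum_ite_eq' Finset.univ t (fun _ => (1:ℝ))]
    simp
  rw [h1, h2, Real.one_rpow, one_mul] at h
  exact le_antisymm h.2 h.1

lemma H0_norm_pair (hp1 : 1 ≤ p) [Fact (1 ≤ ENNReal.ofReal p)] {u : TreeEl (Xsp p)}
    (hu : u ∈ H0 p 1 (Xsp p)) {t t' : Fin u.1 → Bool} (htt : t ≠ t') {σ : ℝ}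
    (hσ : |σ| = 1) : ‖u.2 t + σ • u.2 t'‖ = (2:ℝ) ^ (1/p) := by
  set c : (Fin u.1 → Bool) → ℝ := fun r => if r = t then 1 else if r = t' then σ else 0
    with hc
  have h := hu c
  have h1 : (∑ r, c r • u.2 r) = u.2 t + σ • u.2 t' := by
    have hsplit : ∀ r ∈ Finset.univ, c r • u.2 r
        = (if r = t then u.2 r else 0) + (if r = t' then σ • u.2 r else 0) := by
      intro r _
      by_cases hr1 : r = t
      · subst hr1; rw [if_pos rfl, if_neg htt]
        simp [hc]
      · by_cases hr2 : r = t'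
        · subst hr2; rw [if_neg hr1, if_pos rfl]
          simp [hc, hr1]
        · simp [hc, hr1, hr2]
    rw [Finset.sum_congr rfl hsplit, Finset.sum_add_distrib,
      Finset.sum_ite_eq' Finset.univ t (fun r => u.2 r),
      Finset.sum_ite_eq' Finset.univ t' (fun r => σ • u.2 r)]
    simp
  have h2 : (∑ r, |c r| ^ p) = 2 := by
    have hsplit : ∀ r ∈ Finset.univ, |c r| ^ p
        = (if r = t then (1:ℝ) else 0) + (if r = t' then (1:ℝ) else 0) := by
      intro r _
      by_cases hr1 : r = t
      · subst hr1; rw [if_pos rfl, if_neg htt]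
        simp [hc, Real.one_rpow]
      · by_cases hr2 : r = t'
        · subst hr2; rw [if_neg hr1, if_pos rfl]
          simp [hc, hr1, hσ, Real.one_rpow]
        · simp [hc, hr1, hr2, Real.zero_rpow (hp0 hp1).ne']
    rw [Finset.sum_congr rfl hsplit, Finset.sum_add_distrib,
      Finset.sum_ite_eq' Finset.univ t (fun _ => (1:ℝ)),
      Finset.sum_ite_eq' Finset.univ t' (fun _ => (1:ℝ))]
    norm_num
  rw [h1, h2, one_mul] at h
  exact le_antisymm h.2 h.1

lemma rpow_p_eq_two (hp1 : 1 ≤ p) : ((2:ℝ) ^ (1/p)) ^ p = 2 := by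
  rw [← Real.rpow_mul (by norm_num : (0:ℝ) ≤ 2), one_div,
    inv_mul_cancel₀ (hp0 hp1).ne', Real.rpow_one]

lemma H0_disjoint (hp1 : 1 ≤ p) (hp2 : p ≠ 2) [Fact (1 ≤ ENNReal.ofReal p)]
    {u : TreeEl (Xsp p)} (hu : u ∈ H0 p 1 (Xsp p)) {t t' : Fin u.1 → Bool}
    (htt : t ≠ t') (i : ℕ) : u.2 t i = 0 ∨ u.2 t' i = 0 := by
  by_contra hcon
  push_neg at hcon
  obtain ⟨hx0, hy0⟩ := hcon
  set x := u.2 t with hxd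
  set y := u.2 t' with hyd
  have hxy : ‖x + y‖ = (2:ℝ) ^ (1/p) := by
    have := H0_norm_pair hp1 hu htt (σ := 1) (by norm_num)
    rwa [one_smul] at this
  have hxy' : ‖x - y‖ = (2:ℝ) ^ (1/p) := by
    have := H0_norm_pair hp1 hu htt (σ := -1) (by norm_num)
    rwa [neg_one_smul, ← sub_eq_add_neg] at this
  have hq0 : 0 < (ENNReal.ofReal p).toReal := by rw [toReal_q hp1]; exact hp0 hp1
  have hsummable : ∀ z : Xsp p, Summable (fun i => |z i| ^ p) := by
    intro z
    have := (lp.memℓp z).summable hq0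
    simpa [toReal_q hp1, Real.norm_eq_abs] using this
  have htsum : ∀ z : Xsp p, ∑' i, |z i| ^ p = ‖z‖ ^ p := by
    intro z
    rw [lp_norm_rpow hp1]
  have hx1 : ∑' i, |x i| ^ p = 1 := by
    rw [htsum, H0_norm_single hp1 hu t, Real.one_rpow]
  have hy1 : ∑' i, |y i| ^ p = 1 := by
    rw [htsum, H0_norm_single hp1 hu t', Real.one_rpow]
  have hplus : ∑' i, |x i + y i| ^ p = 2 := by
    have : ∀ i : ℕ, |x i + y i| ^ p = |(x + y) i| ^ p := by
      intro i; rw [lp.coeFn_add]; rfl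
    rw [tsum_congr this, htsum, hxy, rpow_p_eq_two hp1]
  have hminus : ∑' i, |x i - y i| ^ p = 2 := by
    have : ∀ i : ℕ, |x i - y i| ^ p = |(x - y) i| ^ p := by
      intro i; rw [lp.coeFn_sub]; rfl
    rw [tsum_congr this, htsum, hxy', rpow_p_eq_two hp1]
  have hsumplus : Summable (fun i => |x i + y i| ^ p) := by
    have := hsummable (x + y)
    refine this.congr fun i => ?_
    rw [lp.coeFn_add]; rfl
  have hsumminus : Summable (fun i => |x i - y i| ^ p) := by
    have := hsummable (x - y)
    refine this.congr fun i => ?_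
    rw [lp.coeFn_sub]; rfl
  set f : ℕ → ℝ := fun i => |x i + y i| ^ p + |x i - y i| ^ p with hf
  set g : ℕ → ℝ := fun i => 2 * |x i| ^ p + 2 * |y i| ^ p with hg
  have hfsum : Summable f := hsumplus.add hsumminus
  have hgsum : Summable g := ((hsummable x).mul_left 2).add ((hsummable y).mul_left 2)
  have hft : ∑' i, f i = 4 := by
    rw [hf, Summable.tsum_add hsumplus hsumminus, hplus, hminus]; norm_num
  have hgt : ∑' i, g i = 4 := by
    rw [hg, Summable.tsum_add ((hsummable x).mul_left 2) ((hsummable y).mul_left 2),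
      tsum_mul_left, tsum_mul_left, hx1, hy1]
    norm_num
  rcases lt_or_gt_of_ne hp2 with hlt | hgt2
  · have hle : ∀ i, f i ≤ g i := by
      intro i'
      by_cases hz : x i' = 0 ∨ y i' = 0
      · exact le_of_eq (key_eq (hp0 hp1).ne' hz)
      · push_neg at hz
        exact (key_lt hp1 hlt hz.1 hz.2).le
    have hstrict : f i < g i := key_lt hp1 hlt hx0 hy0
    have := Summable.tsum_lt_tsum hle hstrict hfsum hgsum
    rw [hft, hgt] at this
    exact lt_irrefl _ this
  · have hle : ∀ i, g i ≤ f i := by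
      intro i'
      by_cases hz : x i' = 0 ∨ y i' = 0
      · exact le_of_eq (key_eq (hp0 hp1).ne' hz).symm
      · push_neg at hz
        exact (key_gt hgt2 hz.1 hz.2).le
    have hstrict : g i < f i := key_gt hgt2 hx0 hy0
    have := Summable.tsum_lt_tsum hle hstrict hgsum hfsum
    rw [hft, hgt] at this
    exact lt_irrefl _ this
lemma abs_sum_le_of_unique {α : Type*} [Fintype α] (F : α → ℝ) (M : ℝ) (hM : 0 ≤ M)
    (h1 : ∀ s s', F s ≠ 0 → F s' ≠ 0 → s = s') (h2 : ∀ s, |F s| ≤ M) :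
    |∑ s, F s| ≤ M := by
  by_cases hz : ∀ s, F s = 0
  · rw [Finset.sum_congr rfl (fun s _ => hz s)]
    simpa using hM
  · push_neg at hz
    obtain ⟨s₀, hs₀⟩ := hz
    rw [Finset.sum_eq_single s₀
      (fun b _ hb => by_contra fun hb0 => hb (h1 b s₀ hb0 hs₀))
      (fun h => absurd (Finset.mem_univ s₀) h)]
    exact h2 s₀

lemma coord_bound (hp1 : 1 ≤ p) (hp2 : p ≠ 2) [Fact (1 ≤ ENNReal.ofReal p)] :
    ∀ (M : ℕ) (u : TreeEl (Xsp p)), u ∈ Hset p 1 (Xsp p) (M : Ordinal) →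
      ∀ (t : Fin u.1 → Bool) (i : ℕ), |u.2 t i| ≤ (2:ℝ) ^ (-(M:ℝ)/p) := by
  intro M
  induction M with
  | zero =>
      intro u hu t i
      rw [Nat.cast_zero, Hset_zero] at hu
      rw [show (2:ℝ) ^ (-((0:ℕ):ℝ)/p) = 1 by norm_num]
      calc |u.2 t i| ≤ ‖u.2 t‖ := by
            have := lp.norm_apply_le_norm
              ((ENNReal.ofReal_pos.2 (hp0 hp1)).ne' : ENNReal.ofReal p ≠ 0)
              (u.2 t) i
            simpa [Real.norm_eq_abs] using this
        _ = 1 := H0_norm_single hp1 hu t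
  | succ M ih =>
      intro u hu t i
      rw [show ((M+1 : ℕ) : Ordinal) = (M : Ordinal) + 1 by push_cast; rfl,
        Hset_succ] at hu
      obtain ⟨huM, v, hvM, hlt, hfun⟩ := hu
      have hvH0 : v ∈ H0 p 1 (Xsp p) := Hset_nat_subset_H0 1 (Xsp p) M hvM
      set k : ℕ := v.1 - u.1 with hk
      have hk1 : 1 ≤ k := by omega
      have hcoord : u.2 t i = (2:ℝ) ^ (-(k:ℝ)/p) *
          (∑ s : Fin k → Bool,
            (v.2 (fun r => Fin.append t s (Fin.cast (Nat.add_sub_cancel' hlt.le).symm r)) : ∀ _ : ℕ, ℝ) i) := by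
        rw [hfun t, lp.coeFn_smul, Pi.smul_apply, lp.coeFn_sum, Finset.sum_apply,
          _root_.smul_eq_mul]
      rw [hcoord, abs_mul, abs_of_pos (theta_pos hp1 k)]
      have hbound : |∑ s : Fin k → Bool,
          (v.2 (fun r => Fin.append t s (Fin.cast (Nat.add_sub_cancel' hlt.le).symm r)) : ∀ _ : ℕ, ℝ) i|
          ≤ (2:ℝ) ^ (-(M:ℝ)/p) := by
        apply abs_sum_le_of_unique _ _ (theta_pos hp1 M).le
        · intro s s' hs hs'
          by_contra hss
          have hne : (fun r => Fin.append t s (Fin.cast (Nat.add_sub_cancel' hlt.le).symm r))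
              ≠ (fun r => Fin.append t s' (Fin.cast (Nat.add_sub_cancel' hlt.le).symm r)) := by
            intro hfeq
            apply hss
            funext b
            have hb := congrFun hfeq ⟨u.1 + (b : ℕ), by have := b.isLt; omega⟩
            rw [append_cast_eval, append_cast_eval,
              dif_neg (by exact Nat.not_lt.2 (Nat.le_add_right _ _)),
              dif_neg (by exact Nat.not_lt.2 (Nat.le_add_right _ _))] at hb
            have hmk : (⟨u.1 + (b : ℕ) - u.1, by have := b.isLt; omega⟩ : Fin k) = b := by
              ext; simp
            rwa [hmk] at hb
          rcases H0_disjoint hp1 hp2 hvH0 hne i with h0 | h0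
          · exact hs h0
          · exact hs' h0
        · intro s
          exact ih v hvM _ i
      have hkle : (2:ℝ) ^ (-(k:ℝ)/p) ≤ (2:ℝ) ^ (-(1:ℝ)/p) := by
        apply (Real.rpow_le_rpow_left_iff (by norm_num : (1:ℝ) < 2)).2
        have h1k : (1:ℝ) ≤ (k:ℝ) := by exact_mod_cast hk1
        exact (div_le_div_iff_of_pos_right (hp0 hp1)).2 (neg_le_neg h1k)
      have hmul := mul_le_mul hkle hbound (abs_nonneg _)
        (Real.rpow_pos_of_pos (by norm_num : (0:ℝ) < 2) _).le
      refine le_trans hmul (le_of_eq ?_)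
      rw [← Real.rpow_add (by norm_num : (0:ℝ) < 2)]
      congr 1
      push_cast
      ring
lemma rpow_nat_eq_pow (M : ℕ) : (2:ℝ) ^ (-(M:ℝ)/p) = ((2:ℝ) ^ (-(1:ℝ)/p)) ^ M := by
  rw [← Real.rpow_natCast ((2:ℝ) ^ (-(1:ℝ)/p)) M, ← Real.rpow_mul (by norm_num : (0:ℝ) ≤ 2)]
  congr 1
  ring

lemma Hset_omega0_empty (hp1 : 1 ≤ p) (hp2 : p ≠ 2) [Fact (1 ≤ ENNReal.ofReal p)] :
    Hset p 1 (Xsp p) Ordinal.omega0 = ∅ := by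
  rw [Set.eq_empty_iff_forall_notMem]
  intro u hu
  rw [Hset_limit _ _ _ Ordinal.isSuccLimit_omega0] at hu
  have hcb : ∀ (M : ℕ) (i : ℕ), |u.2 default i| ≤ (2:ℝ) ^ (-(M:ℝ)/p) :=
    fun M i => coord_bound hp1 hp2 M u (hu _ (Ordinal.nat_lt_omega0 M)) default i
  have hzero : u.2 default = 0 := by
    apply Subtype.ext
    funext i
    show (u.2 default : ∀ _ : ℕ, ℝ) i = 0
    by_contra habs
    have hpos : 0 < |u.2 default i| := abs_pos.2 habs
    have hbase0 : 0 < (2:ℝ) ^ (-(1:ℝ)/p) := Real.rpow_pos_of_pos (by norm_num) _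
    have hbase : (2:ℝ) ^ (-(1:ℝ)/p) < 1 := by
      apply Real.rpow_lt_one_of_one_lt_of_neg (by norm_num)
      have := hp0 hp1
      rw [neg_div]
      simp [div_pos, this]
    obtain ⟨M, hM⟩ := exists_pow_lt_of_lt_one hpos hbase
    have := (hcb M i).trans_lt (by rw [rpow_nat_eq_pow]; exact hM)
    exact lt_irrefl _ this
  have huH0 : u ∈ H0 p 1 (Xsp p) := by
    have := hu 0 (by simpa using Ordinal.nat_lt_omega0 0)
    rwa [Hset_zero] at this
  have h1 : ‖u.2 default‖ = 1 := H0_norm_single hp1 huH0 default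
  rw [hzero, norm_zero] at h1
  norm_num at h1

lemma tree_coord (hp1 : 1 ≤ p) (n : ℕ) :
    ((tree hp1 0 n).2 default : ∀ _ : ℕ, ℝ) 0 = (2:ℝ) ^ (-(n:ℝ)/p) := by
  show Wfun p 0 n default 0 = _
  rw [Wfun, if_pos]
  exact ⟨Nat.pow_pos (by norm_num), Subsingleton.elim _ _⟩

lemma tree_not_mem (hp1 : 1 ≤ p) (hp2 : p ≠ 2) [Fact (1 ≤ ENNReal.ofReal p)] (n : ℕ) :
    tree hp1 0 n ∉ Hset p 1 (Xsp p) ((n+1 : ℕ) : Ordinal) := by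
  intro hmem
  have := coord_bound hp1 hp2 (n+1) _ hmem default 0
  rw [tree_coord hp1 n] at this
  have hlt : (2:ℝ) ^ (-((n+1:ℕ):ℝ)/p) < (2:ℝ) ^ (-(n:ℝ)/p) := by
    apply (Real.rpow_lt_rpow_left_iff (by norm_num : (1:ℝ) < 2)).2
    rw [div_lt_div_iff_of_pos_right (hp0 hp1)]
    push_cast
    linarith
  rw [abs_of_pos (theta_pos hp1 n)] at this
  exact lt_irrefl _ (this.trans_lt hlt)
/-- Let `1 ≤ p < ∞` with `p ≠ 2`.  Then `h_p(1, ℓ_p) = ω₀`, where `h_p(1, ·)` is the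
ordinal `L_p`-index computed with the parameter `δ = 1`. -/
theorem hIdx_one_lp (p : ℝ) (hp1 : 1 ≤ p) (hp2 : p ≠ 2) :
    haveI : Fact (1 ≤ ENNReal.ofReal p) := ⟨ENNReal.one_le_ofReal.2 hp1⟩
    hIdx p 1 (lp (fun _ : ℕ => ℝ) (ENNReal.ofReal p)) = Ordinal.omega0 := by
  haveI : Fact (1 ≤ ENNReal.ofReal p) := ⟨ENNReal.one_le_ofReal.2 hp1⟩
  show hIdx p 1 (lp (fun _ : ℕ => ℝ) (ENNReal.ofReal p)) = Ordinal.omega0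
  rw [hIdx]
  have hempty := Hset_omega0_empty hp1 hp2
  have hmemS : Hset p 1 (Xsp p) Ordinal.omega0 = Hset p 1 (Xsp p) (Ordinal.omega0 + 1) := by
    rw [Hset_succ, hempty]
    ext u
    simp
  apply le_antisymm
  · exact csInf_le' hmemS
  · refine le_csInf ⟨_, hmemS⟩ fun b hb => ?_
    by_contra hble
    push_neg at hble
    obtain ⟨n, rfl⟩ := Ordinal.lt_omega0.1 hble
    have htree := tree_mem_Hset hp1 n 0 n (le_refl n)
    have hmem1 : tree hp1 0 n ∈ Hset p 1 (Xsp p) ((n : Ordinal) + 1) := hb ▸ htree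
    rw [show ((n : Ordinal) + 1) = ((n+1 : ℕ) : Ordinal) by push_cast; rfl] at hmem1
    exact tree_not_mem hp1 hp2 n hmem1

end
end

section
/- Let 1 ≤ p < ∞ with p ≠ 2, let k ∈ ℕ, and let u_1, …, u_{2^k} be elements of ℓ_p such that ‖∑_{i=1}^{2^k} c_i u_i‖_{ℓ_p} = (∑_{i=1}^{2^k} |c_i|^p)^{1/p} for all real scalars c_1, …, c_{2^k} (i.e. u_1, …, u_{2^k} are isometrically equivalent to the unit vector basis of ℓ_p^{2^k}). Writing u_i = ∑_{j ∈ N_i} b_j^i e_j, where (e_j) is the unit vector basis of ℓ_p and N_i = {j : b_j^i ≠ 0} is the support of u_i, the supports are pairwise disjoint: N_i ∩ N_j = ∅ whenever i ≠ j. -/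
set_option synthInstance.maxHeartbeats 1000000
set_option maxHeartbeats 2000000

open MeasureTheory ProbabilityTheory Ordinal
open scoped ENNReal

noncomputable section



lemma abs_rpow_eq_sq_rpow (x p : ℝ) : |x| ^ p = (x ^ 2) ^ (p / 2) := by
  rw [← sq_abs x, ← Real.rpow_two, ← Real.rpow_mul (abs_nonneg x),
    show 2 * (p / 2) = p by ring]

lemma concave2 {A B r : ℝ} (hA : 0 ≤ A) (hB : 0 ≤ B) (hr0 : 0 < r) (hr1 : r ≤ 1) :
    A ^ r + B ^ r ≤ 2 * ((A + B) / 2) ^ r := by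
  have hp : (1:ℝ) ≤ 1 / r := one_le_one_div hr0 hr1
  have h := Real.arith_mean_le_rpow_mean (Finset.univ : Finset (Fin 2))
    ![1/2, 1/2] ![A ^ r, B ^ r] (by intro i _; fin_cases i <;> norm_num)
    (by simp [Fin.sum_univ_two]; norm_num)
    (by intro i _; fin_cases i <;> exact Real.rpow_nonneg (by assumption) r) hp
  simp only [Fin.sum_univ_two, Matrix.cons_val_zero, Matrix.cons_val_one, Matrix.head_cons] at h
  rw [one_div r, Real.rpow_rpow_inv hA hr0.ne', Real.rpow_rpow_inv hB hr0.ne',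
    show (1:ℝ) / r⁻¹ = r by rw [one_div, inv_inv],
    show 1/2 * A + 1/2 * B = (A + B) / 2 by ring] at h
  linarith

lemma convex2 {A B r : ℝ} (hA : 0 ≤ A) (hB : 0 ≤ B) (hr1 : 1 ≤ r) :
    2 * ((A + B) / 2) ^ r ≤ A ^ r + B ^ r := by
  have h := Real.rpow_arith_mean_le_arith_mean_rpow (Finset.univ : Finset (Fin 2))
    ![1/2, 1/2] ![A, B] (by intro i _; fin_cases i <;> norm_num)
    (by simp [Fin.sum_univ_two]; norm_num)
    (by intro i _; fin_cases i <;> assumption) hr1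
  simp only [Fin.sum_univ_two, Matrix.cons_val_zero, Matrix.cons_val_one, Matrix.head_cons] at h
  rw [show 1/2 * A + 1/2 * B = (A + B) / 2 by ring] at h
  linarith

lemma rpow_split {x r : ℝ} (hx : 0 < x) : x ^ r = x * x ^ (r - 1) := by
  have h : x ^ r = x ^ (1 + (r - 1)) := by norm_num
  rw [h, Real.rpow_add hx, Real.rpow_one]

lemma strict_subadd {A B r : ℝ} (hA : 0 < A) (hB : 0 < B) (hr0 : 0 < r) (hr1 : r < 1) :
    (A + B) ^ r < A ^ r + B ^ r := by
  have h1 : (A + B) ^ (r - 1) < A ^ (r - 1) :=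
    Real.rpow_lt_rpow_of_neg hA (lt_add_of_pos_right A hB) (by linarith)
  have h2 : (A + B) ^ (r - 1) ≤ B ^ (r - 1) :=
    Real.rpow_le_rpow_of_nonpos hB (le_add_of_nonneg_left hA.le) (by linarith)
  calc (A + B) ^ r = (A + B) * (A + B) ^ (r - 1) := rpow_split (by linarith)
    _ = A * (A + B) ^ (r - 1) + B * (A + B) ^ (r - 1) := by ring
    _ < A * A ^ (r - 1) + B * B ^ (r - 1) :=
        add_lt_add_of_lt_of_le (mul_lt_mul_of_pos_left h1 hA)
          (mul_le_mul_of_nonneg_left h2 hB.le)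
    _ = A ^ r + B ^ r := by rw [← rpow_split hA, ← rpow_split hB]

lemma strict_superadd {A B r : ℝ} (hA : 0 < A) (hB : 0 < B) (hr : 1 < r) :
    A ^ r + B ^ r < (A + B) ^ r := by
  have h1 : A ^ (r - 1) < (A + B) ^ (r - 1) :=
    Real.rpow_lt_rpow hA.le (lt_add_of_pos_right A hB) (by linarith)
  have h2 : B ^ (r - 1) ≤ (A + B) ^ (r - 1) :=
    Real.rpow_le_rpow hB.le (le_add_of_nonneg_left hA.le) (by linarith)
  calc A ^ r + B ^ r = A * A ^ (r - 1) + B * B ^ (r - 1) := by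
        rw [← rpow_split hA, ← rpow_split hB]
    _ < A * (A + B) ^ (r - 1) + B * (A + B) ^ (r - 1) :=
        add_lt_add_of_lt_of_le (mul_lt_mul_of_pos_left h1 hA)
          (mul_le_mul_of_nonneg_left h2 hB.le)
    _ = (A + B) * (A + B) ^ (r - 1) := by ring
    _ = (A + B) ^ r := (rpow_split (by linarith : (0:ℝ) < A + B)).symm

lemma subadd_le {A B r : ℝ} (hA : 0 ≤ A) (hB : 0 ≤ B) (hr0 : 0 < r) (hr1 : r ≤ 1) :
    (A + B) ^ r ≤ A ^ r + B ^ r := by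
  rcases eq_or_lt_of_le hr1 with rfl | hr1'
  · simp
  rcases hA.eq_or_lt with rfl | hA'
  · simp [Real.zero_rpow hr0.ne']
  rcases hB.eq_or_lt with rfl | hB'
  · simp [Real.zero_rpow hr0.ne']
  exact (strict_subadd hA' hB' hr0 hr1').le

lemma superadd_le {A B r : ℝ} (hA : 0 ≤ A) (hB : 0 ≤ B) (hr : 1 ≤ r) :
    A ^ r + B ^ r ≤ (A + B) ^ r := by
  rcases eq_or_lt_of_le hr with rfl | hr'
  · simp
  rcases hA.eq_or_lt with rfl | hA'
  · simp [Real.zero_rpow (by linarith : r ≠ 0)]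
  rcases hB.eq_or_lt with rfl | hB'
  · simp [Real.zero_rpow (by linarith : r ≠ 0)]
  exact (strict_superadd hA' hB' hr').le

lemma key_le {p : ℝ} (hp0 : 0 < p) (hp2 : p ≤ 2) (a b : ℝ) :
    |a + b| ^ p + |a - b| ^ p ≤ 2 * (|a| ^ p + |b| ^ p) := by
  have hr0 : 0 < p / 2 := by linarith
  have hr1 : p / 2 ≤ 1 := by linarith
  rw [abs_rpow_eq_sq_rpow (a + b) p, abs_rpow_eq_sq_rpow (a - b) p,
    abs_rpow_eq_sq_rpow a p, abs_rpow_eq_sq_rpow b p]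
  have h1 := concave2 (sq_nonneg (a + b)) (sq_nonneg (a - b)) hr0 hr1
  rw [show ((a + b) ^ 2 + (a - b) ^ 2) / 2 = a ^ 2 + b ^ 2 by ring] at h1
  have h2 := subadd_le (sq_nonneg a) (sq_nonneg b) hr0 hr1
  linarith

lemma key_lt_s3 {p : ℝ} (hp0 : 0 < p) (hp2 : p < 2) {a b : ℝ} (ha : a ≠ 0) (hb : b ≠ 0) :
    |a + b| ^ p + |a - b| ^ p < 2 * (|a| ^ p + |b| ^ p) := by
  have hr0 : 0 < p / 2 := by linarith
  have hr1 : p / 2 < 1 := by linarith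
  rw [abs_rpow_eq_sq_rpow (a + b) p, abs_rpow_eq_sq_rpow (a - b) p,
    abs_rpow_eq_sq_rpow a p, abs_rpow_eq_sq_rpow b p]
  have h1 := concave2 (sq_nonneg (a + b)) (sq_nonneg (a - b)) hr0 hr1.le
  rw [show ((a + b) ^ 2 + (a - b) ^ 2) / 2 = a ^ 2 + b ^ 2 by ring] at h1
  have h2 := strict_subadd (by positivity : (0:ℝ) < a ^ 2) (by positivity : (0:ℝ) < b ^ 2) hr0 hr1
  linarith

lemma key_ge {p : ℝ} (hp2 : 2 ≤ p) (a b : ℝ) :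
    2 * (|a| ^ p + |b| ^ p) ≤ |a + b| ^ p + |a - b| ^ p := by
  have hr1 : 1 ≤ p / 2 := by linarith
  rw [abs_rpow_eq_sq_rpow (a + b) p, abs_rpow_eq_sq_rpow (a - b) p,
    abs_rpow_eq_sq_rpow a p, abs_rpow_eq_sq_rpow b p]
  have h1 := convex2 (sq_nonneg (a + b)) (sq_nonneg (a - b)) hr1
  rw [show ((a + b) ^ 2 + (a - b) ^ 2) / 2 = a ^ 2 + b ^ 2 by ring] at h1
  have h2 := superadd_le (sq_nonneg a) (sq_nonneg b) hr1
  linarith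

lemma key_gt_s3 {p : ℝ} (hp2 : 2 < p) {a b : ℝ} (ha : a ≠ 0) (hb : b ≠ 0) :
    2 * (|a| ^ p + |b| ^ p) < |a + b| ^ p + |a - b| ^ p := by
  have hr1 : 1 < p / 2 := by linarith
  rw [abs_rpow_eq_sq_rpow (a + b) p, abs_rpow_eq_sq_rpow (a - b) p,
    abs_rpow_eq_sq_rpow a p, abs_rpow_eq_sq_rpow b p]
  have h1 := convex2 (sq_nonneg (a + b)) (sq_nonneg (a - b)) hr1.le
  rw [show ((a + b) ^ 2 + (a - b) ^ 2) / 2 = a ^ 2 + b ^ 2 by ring] at h1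
  have h2 := strict_superadd (by positivity : (0:ℝ) < a ^ 2) (by positivity : (0:ℝ) < b ^ 2) hr1
  linarith

/-- Let `1 ≤ p < ∞`, `p ≠ 2`, and let `u_1, …, u_{2^k} ∈ ℓ_p` be isometrically equivalent
to the unit vector basis of `ℓ_p^{2^k}`.  Then the supports `N_i = {j : (u_i)_j ≠ 0}` are
pairwise disjoint. -/
theorem disjoint_supports (p : ℝ) (hp1 : 1 ≤ p) (hp2 : p ≠ 2) (k : ℕ) :
    haveI : Fact (1 ≤ ENNReal.ofReal p) := ⟨ENNReal.one_le_ofReal.2 hp1⟩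
    ∀ u : Fin (2 ^ k) → lp (fun _ : ℕ => ℝ) (ENNReal.ofReal p),
      (∀ c : Fin (2 ^ k) → ℝ,
        ‖∑ i, c i • u i‖ = (∑ i, |c i| ^ p) ^ (1 / p)) →
      ∀ i j : Fin (2 ^ k), i ≠ j →
        ∀ m : ℕ, (u i : ∀ _ : ℕ, ℝ) m ≠ 0 → (u j : ∀ _ : ℕ, ℝ) m = 0 := by
  haveI : Fact (1 ≤ ENNReal.ofReal p) := ⟨ENNReal.one_le_ofReal.2 hp1⟩
  intro u hu i j hij m hai
  have hp0 : (0:ℝ) < p := lt_of_lt_of_le one_pos hp1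
  have hP : (ENNReal.ofReal p).toReal = p := ENNReal.toReal_ofReal hp0.le
  have hptop : 0 < (ENNReal.ofReal p).toReal := by rw [hP]; exact hp0
  -- the norm of `u i + s • u j` for a sign `s`
  have key : ∀ s : ℝ, |s| = 1 → ‖u i + s • u j‖ = (2:ℝ) ^ (1/p) := by
    intro s hs
    have h := hu (fun t => if t = i then 1 else if t = j then s else 0)
    have e1 : (∑ t, (if t = i then (1:ℝ) else if t = j then s else 0) • u t)
        = u i + s • u j := by
      have hsplit : ∀ t : Fin (2^k), (if t = i then (1:ℝ) else if t = j then s else 0) • u t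
          = (if t = i then (1:ℝ) else 0) • u t + (if t = j then s else 0) • u t := by
        intro t
        by_cases h1 : t = i
        · subst h1; rw [if_pos rfl, if_pos rfl, if_neg hij]; simp
        · by_cases h2 : t = j <;> simp [h1, h2, Ne.symm hij]
      rw [Finset.sum_congr rfl fun t _ => hsplit t, Finset.sum_add_distrib]
      simp [ite_smul, Finset.sum_ite_eq']
    have e2 : (∑ t, |if t = i then (1:ℝ) else if t = j then s else 0| ^ p) = 2 := by
      have hterm : ∀ t : Fin (2^k), |if t = i then (1:ℝ) else if t = j then s else 0| ^ p
          = (if t = i then (1:ℝ) else 0) + (if t = j then 1 else 0) := by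
        intro t
        by_cases h1 : t = i
        · subst h1; rw [if_pos rfl, if_pos rfl, if_neg hij]; simp
        · by_cases h2 : t = j
          · subst h2; rw [if_neg h1, if_pos rfl, if_neg h1, if_pos rfl, hs]; simp
          · rw [if_neg h1, if_neg h2, if_neg h1, if_neg h2]
            simp [Real.zero_rpow hp0.ne']
      rw [Finset.sum_congr rfl fun t _ => hterm t, Finset.sum_add_distrib]
      simp [Finset.sum_ite_eq']
      norm_num
    rw [e1, e2] at h
    exact h
  -- the norm of each `u t` is 1
  have hone : ∀ t : Fin (2^k), ‖u t‖ = 1 := by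
    intro t
    have h := hu (fun s => if s = t then 1 else 0)
    have e1 : (∑ s, (if s = t then (1:ℝ) else 0) • u s) = u t := by
      simp [ite_smul, Finset.sum_ite_eq']
    have e2 : (∑ s, |if s = t then (1:ℝ) else 0| ^ p) = 1 := by
      have hterm : ∀ s : Fin (2^k), |if s = t then (1:ℝ) else 0| ^ p
          = if s = t then (1:ℝ) else 0 := by
        intro s; split_ifs <;> simp [Real.zero_rpow hp0.ne']
      rw [Finset.sum_congr rfl fun s _ => hterm s, Finset.sum_ite_eq']
      simp
    rw [e1, e2, Real.one_rpow] at h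
    exact h
  set a : ℕ → ℝ := fun n => (u i : ∀ _ : ℕ, ℝ) n with ha_def
  set b : ℕ → ℝ := fun n => (u j : ∀ _ : ℕ, ℝ) n with hb_def
  -- HasSum facts
  have hA : HasSum (fun n => |a n| ^ p) 1 := by
    have h := lp.hasSum_norm hptop (u i)
    rw [hone i, Real.one_rpow, hP] at h
    simpa [Real.norm_eq_abs] using h
  have hB : HasSum (fun n => |b n| ^ p) 1 := by
    have h := lp.hasSum_norm hptop (u j)
    rw [hone j, Real.one_rpow, hP] at h
    simpa [Real.norm_eq_abs] using h
  have htwo : ((2:ℝ) ^ (1/p)) ^ p = 2 := by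
    rw [← Real.rpow_mul (by norm_num : (0:ℝ) ≤ 2), one_div_mul_cancel hp0.ne', Real.rpow_one]
  have hS : HasSum (fun n => |a n + b n| ^ p) 2 := by
    have h := lp.hasSum_norm hptop (u i + (1:ℝ) • u j)
    rw [key 1 (by norm_num), hP, htwo] at h
    have hco : ∀ n, ‖(↑(u i + (1:ℝ) • u j) : ∀ _ : ℕ, ℝ) n‖ = |a n + b n| := by
      intro n
      simp [ha_def, hb_def, Real.norm_eq_abs]
    simpa [hco] using h
  have hD : HasSum (fun n => |a n - b n| ^ p) 2 := by
    have h := lp.hasSum_norm hptop (u i + (-1:ℝ) • u j)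
    rw [key (-1) (by norm_num), hP, htwo] at h
    have hco : ∀ n, ‖(↑(u i + (-1:ℝ) • u j) : ∀ _ : ℕ, ℝ) n‖ = |a n - b n| := by
      intro n
      simp [ha_def, hb_def, Real.norm_eq_abs, sub_eq_add_neg]
    simpa [hco, ha_def, hb_def, sub_eq_add_neg] using h
  have hsum : HasSum
      (fun n => 2 * (|a n| ^ p + |b n| ^ p) - (|a n + b n| ^ p + |a n - b n| ^ p)) 0 := by
    have h := ((hA.add hB).mul_left 2).sub (hS.add hD)
    convert h using 1
    · rfl
    · norm_num
  rcases lt_or_gt_of_ne hp2 with hlt | hgt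
  · -- p < 2
    have hnn : ∀ n, 0 ≤ 2 * (|a n| ^ p + |b n| ^ p) - (|a n + b n| ^ p + |a n - b n| ^ p) :=
      fun n => by have := key_le hp0 hlt.le (a n) (b n); linarith
    have hle := le_hasSum hsum m (fun n _ => hnn n)
    by_contra hbm
    have hstrict := key_lt_s3 hp0 hlt hai hbm
    have hle2 : 2 * (|a m| ^ p + |b m| ^ p) - (|a m + b m| ^ p + |a m - b m| ^ p) ≤ 0 := hle
    linarith
  · -- 2 < p
    have hsum' : HasSum
        (fun n => (|a n + b n| ^ p + |a n - b n| ^ p) - 2 * (|a n| ^ p + |b n| ^ p)) 0 := by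
      have h := (hS.add hD).sub ((hA.add hB).mul_left 2)
      convert h using 1
      · rfl
      · norm_num
    have hnn : ∀ n, 0 ≤ (|a n + b n| ^ p + |a n - b n| ^ p) - 2 * (|a n| ^ p + |b n| ^ p) :=
      fun n => by have := key_ge hgt.le (a n) (b n); linarith
    have hle := le_hasSum hsum' m (fun n _ => hnn n)
    by_contra hbm
    have hstrict := key_gt_s3 hgt hai hbm
    have hle2 : (|a m + b m| ^ p + |a m - b m| ^ p) - 2 * (|a m| ^ p + |b m| ^ p) ≤ 0 := hle
    linarith


end
end
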